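/- Let H and H̃ = H + εM be real symmetric n×n matrices, with descending eigenvalues λ_1 ≥ ... ≥ λ_n of H and corresponding unit eigenvectors u_k of H and ũ_k of H̃. Then sin∠(u_k, ũ_k) ≤ 2ε‖M‖_op / min(λ_{k-1} - λ_k, λ_k - λ_{k+1}), provided the denominator is positive (Davis–Kahan sin Θ bound, Yu–Wang–Samworth variant). -/

import Mathlib

open scoped RealInnerProductSpace

/-!
By Weyl's inequality, proved with the Courant–Fischer dimension count, the perturbed eigenvalue
`λ̃_k` lies within `ε‖M‖` of `λ_k`, hence at distance at least `δ - ε‖M‖` from every other `λ_i`,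
where `δ` is the eigengap. Expanding `ũ_k` in the eigenbasis of `H`, the eigen-equation gives
`(λ̃_k - λ_i) ⟪u_i, ũ_k⟫ = ε ⟪u_i, M ũ_k⟫`; summing squares over `i ≠ k` yields
`(δ - ε‖M‖)² sin² θ ≤ ε² ‖M‖²`, so `sin θ ≤ 2ε‖M‖/δ` when `2ε‖M‖ < δ`, and the bound is trivial
otherwise.
-/

variable {E : Type*} [NormedAddCommGroup E] [InnerProductSpace ℝ E]

namespace OrthonormalBasis

variable {ι : Type*} [Fintype ι] (b : OrthonormalBasis ι ℝ E) {A : E →L[ℝ] E} {μ : ι → ℝ}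

theorem inner_apply_eq_mul_inner (hA : ∀ i, A (b i) = μ i • b i) (i : ι) (x : E) :
    ⟪b i, A x⟫ = μ i * ⟪b i, x⟫ := by
  conv_lhs => rw [← b.sum_repr' x]
  simp only [map_sum, map_smul, hA, smul_smul]
  rw [b.orthonormal.inner_right_fintype, mul_comm]

theorem inner_apply_self_eq_sum (hA : ∀ i, A (b i) = μ i • b i) (x : E) :
    ⟪x, A x⟫ = ∑ i, μ i * ⟪b i, x⟫ ^ 2 := by
  rw [← b.sum_inner_mul_inner x (A x)]
  refine Finset.sum_congr rfl fun i _ => ?_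
  rw [b.inner_apply_eq_mul_inner hA, real_inner_comm]
  ring

theorem le_inner_apply_self (hA : ∀ i, A (b i) = μ i • b i) {x : E} {c : ℝ}
    (hc : ∀ i, ⟪b i, x⟫ ≠ 0 → c ≤ μ i) : c * ‖x‖ ^ 2 ≤ ⟪x, A x⟫ := by
  rw [b.inner_apply_self_eq_sum hA, ← b.sum_sq_inner_right, Finset.mul_sum]
  refine Finset.sum_le_sum fun i _ => ?_
  by_cases hi : ⟪b i, x⟫ = 0
  · simp [hi]
  · exact mul_le_mul_of_nonneg_right (hc i hi) (sq_nonneg _)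

theorem inner_apply_self_le (hA : ∀ i, A (b i) = μ i • b i) {x : E} {c : ℝ}
    (hc : ∀ i, ⟪b i, x⟫ ≠ 0 → μ i ≤ c) : ⟪x, A x⟫ ≤ c * ‖x‖ ^ 2 := by
  rw [b.inner_apply_self_eq_sum hA, ← b.sum_sq_inner_right, Finset.mul_sum]
  refine Finset.sum_le_sum fun i _ => ?_
  by_cases hi : ⟪b i, x⟫ = 0
  · simp [hi]
  · exact mul_le_mul_of_nonneg_right (hc i hi) (sq_nonneg _)

end OrthonormalBasis

theorem exists_ne_zero_inner_eq_zero_of_lt_of_gt [FiniteDimensional ℝ E] {n : ℕ}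
    (hE : Module.finrank ℝ E = n) (b c : Fin n → E) (k : Fin n) :
    ∃ x ≠ 0, (∀ i, k < i → ⟪b i, x⟫ = 0) ∧ ∀ i, i < k → ⟪c i, x⟫ = 0 := by
  let f : E →ₗ[ℝ] {i // i ≠ k} → ℝ :=
    LinearMap.pi fun i => innerₛₗ ℝ (if k < (i : Fin n) then b i else c i)
  have hf : Module.finrank ℝ ({i // i ≠ k} → ℝ) < Module.finrank ℝ E := by
    simpa [hE] using k.pos
  obtain ⟨x, hx, hx0⟩ :=
    Submodule.exists_mem_ne_zero_of_ne_bot (LinearMap.ker_ne_bot_of_finrank_lt hf)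
  have hfx (i : Fin n) (hi : i ≠ k) : ⟪if k < i then b i else c i, x⟫ = 0 :=
    congrFun (LinearMap.mem_ker.mp hx : f x = 0) ⟨i, hi⟩
  refine ⟨x, hx0, fun i hi => ?_, fun i hi => ?_⟩
  · simpa [hi] using hfx i hi.ne'
  · simpa [hi.not_gt] using hfx i hi.ne

theorem OrthonormalBasis.eigenvalue_sub_norm_sub_le {n : ℕ} (b c : OrthonormalBasis (Fin n) ℝ E)
    {A B : E →L[ℝ] E} {μ ν : Fin n → ℝ} (hA : ∀ i, A (b i) = μ i • b i)
    (hB : ∀ i, B (c i) = ν i • c i) (hμ : Antitone μ) (hν : Antitone ν) (k : Fin n) :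
    μ k - ‖B - A‖ ≤ ν k := by
  have := b.toBasis.finiteDimensional_of_finite
  obtain ⟨x, hx0, hbx, hcx⟩ := exists_ne_zero_inner_eq_zero_of_lt_of_gt
    (by simpa using Module.finrank_eq_card_basis b.toBasis) b c k
  -- `x` lies in `span {b i | i ≤ k} ∩ span {c i | i ≥ k}`.
  have hAx : μ k * ‖x‖ ^ 2 ≤ ⟪x, A x⟫ :=
    b.le_inner_apply_self hA fun i hi => hμ (not_lt.mp fun hki => hi (hbx i hki))
  have hBx : ⟪x, B x⟫ ≤ ν k * ‖x‖ ^ 2 :=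
    c.inner_apply_self_le hB fun i hi => hν (not_lt.mp fun hik => hi (hcx i hik))
  have hDx : -(‖B - A‖ * ‖x‖ ^ 2) ≤ ⟪x, B x⟫ - ⟪x, A x⟫ := by
    rw [← inner_sub_right, ← sub_apply]
    refine neg_le_of_abs_le ((abs_real_inner_le_norm _ _).trans ?_)
    nlinarith [(B - A).le_opNorm x, norm_nonneg x]
  have : (μ k - ‖B - A‖) * ‖x‖ ^ 2 ≤ ν k * ‖x‖ ^ 2 := by linarith
  exact le_of_mul_le_mul_right this (by positivity)

theorem OrthonormalBasis.abs_eigenvalue_sub_le_norm_sub {n : ℕ}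
    (b c : OrthonormalBasis (Fin n) ℝ E) {A B : E →L[ℝ] E} {μ ν : Fin n → ℝ}
    (hA : ∀ i, A (b i) = μ i • b i) (hB : ∀ i, B (c i) = ν i • c i) (hμ : Antitone μ)
    (hν : Antitone ν) (k : Fin n) : |ν k - μ k| ≤ ‖B - A‖ := by
  have h₁ := b.eigenvalue_sub_norm_sub_le c hA hB hμ hν k
  have h₂ := c.eigenvalue_sub_norm_sub_le b hB hA hν hμ k
  rw [← norm_neg, neg_sub] at h₂
  exact abs_sub_le_iff.mpr ⟨by linarith, by linarith⟩

theorem OrthonormalBasis.sq_mul_sub_inner_sq_le {ι : Type*} [Fintype ι]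
    (b : OrthonormalBasis ι ℝ E) {A P : E →L[ℝ] E} {μ : ι → ℝ}
    (hA : ∀ i, A (b i) = μ i • b i) {x : E} {t : ℝ} (hx : (A + P) x = t • x) {k : ι} {g : ℝ}
    (hg₀ : 0 ≤ g) (hg : ∀ i ≠ k, g ≤ |t - μ i|) :
    g ^ 2 * (‖x‖ ^ 2 - ⟪b k, x⟫ ^ 2) ≤ ‖P x‖ ^ 2 := by
  classical
  have hcoord (i : ι) : (t - μ i) * ⟪b i, x⟫ = ⟪b i, P x⟫ := by
    have := congrArg (⟪b i, ·⟫) hx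
    simp only [add_apply, inner_add_right, real_inner_smul_right,
      b.inner_apply_eq_mul_inner hA] at this
    linarith
  rw [← b.sum_sq_inner_right x, ← Finset.add_sum_erase _ _ (Finset.mem_univ k),
    add_sub_cancel_left, Finset.mul_sum, ← b.sum_sq_inner_right (P x)]
  calc ∑ i ∈ Finset.univ.erase k, g ^ 2 * ⟪b i, x⟫ ^ 2
      ≤ ∑ i ∈ Finset.univ.erase k, ((t - μ i) * ⟪b i, x⟫) ^ 2 := by
        refine Finset.sum_le_sum fun i hi => ?_
        rw [mul_pow, ← sq_abs (t - μ i)]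
        gcongr
        exact hg i (Finset.ne_of_mem_erase hi)
    _ ≤ ∑ i, ((t - μ i) * ⟪b i, x⟫) ^ 2 :=
        Finset.sum_le_sum_of_subset_of_nonneg (Finset.subset_univ _) fun i _ _ => sq_nonneg _
    _ = ∑ i, ⟪b i, P x⟫ ^ 2 := by simp only [hcoord]

theorem Antitone.min_sub_le_abs_sub {n : ℕ} {lam : Fin n → ℝ} (hlam : Antitone lam) {k : Fin n}
    (hkn : (k : ℕ) + 1 < n) {i : Fin n} (hi : i ≠ k) :
    min (lam ⟨(k : ℕ) - 1, by omega⟩ - lam k) (lam k - lam ⟨(k : ℕ) + 1, hkn⟩) ≤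
      |lam k - lam i| := by
  rcases lt_or_gt_of_ne hi with hik | hki
  · have : lam ⟨(k : ℕ) - 1, by omega⟩ ≤ lam i :=
      hlam (Fin.le_iff_val_le_val.mpr (by simp only; omega))
    calc _ ≤ lam ⟨(k : ℕ) - 1, by omega⟩ - lam k := min_le_left _ _
      _ ≤ lam i - lam k := by linarith
      _ ≤ |lam k - lam i| := abs_sub_comm (lam k) (lam i) ▸ le_abs_self _
  · have : lam i ≤ lam ⟨(k : ℕ) + 1, hkn⟩ := hlam (Fin.le_iff_val_le_val.mpr hki)
    calc _ ≤ lam k - lam ⟨(k : ℕ) + 1, hkn⟩ := min_le_right _ _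
      _ ≤ lam k - lam i := by linarith
      _ ≤ |lam k - lam i| := le_abs_self _

theorem sqrt_le_two_mul_div_of_gap {s δ e : ℝ} (hδ : 0 < δ) (he : 0 ≤ e) (hs : s ≤ 1)
    (h : e ≤ δ → (δ - e) ^ 2 * s ≤ e ^ 2) : √s ≤ 2 * e / δ := by
  rw [Real.sqrt_le_iff]
  refine ⟨by positivity, ?_⟩
  rcases le_or_gt δ (2 * e) with h2e | h2e
  · calc s ≤ 1 := hs
      _ ≤ (2 * e / δ) ^ 2 := one_le_pow₀ ((one_le_div hδ).mpr h2e)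
  · have := h (by linarith)
    rw [div_pow, le_div_iff₀ (by positivity)]
    rcases le_or_gt 0 s with hs₀ | hs₀
    · nlinarith [mul_le_mul_of_nonneg_left (show δ ^ 2 ≤ 4 * (δ - e) ^ 2 by nlinarith) hs₀]
    · nlinarith [sq_nonneg e, sq_nonneg δ]

theorem Orthonormal.exists_orthonormalBasis_coe_eq {ι : Type*} [Fintype ι]
    [FiniteDimensional ℝ E] {v : ι → E} (hv : Orthonormal ℝ v)
    (hcard : Fintype.card ι = Module.finrank ℝ E) : ∃ b : OrthonormalBasis ι ℝ E, ⇑b = v :=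
  ⟨.mk hv (hv.linearIndependent.span_eq_top_of_card_eq_finrank' hcard).ge,
    OrthonormalBasis.coe_mk _ _⟩

theorem Matrix.toEuclideanLin_apply_eq_smul_of_mulVec_eq {m : Type*} [Fintype m] [DecidableEq m]
    {A : Matrix m m ℝ} {x : EuclideanSpace ℝ m} {c : ℝ} (h : A.mulVec x = c • x) :
    Matrix.toEuclideanLin A x = c • x := by
  rw [Matrix.toLpLin_apply, h]
  rfl

/-- Davis–Kahan sin Θ bound (Yu–Wang–Samworth variant) for the k-th eigenvector of a
    symmetric matrix H under a symmetric perturbation εM. -/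
theorem davis_kahan_sin_theta (n : ℕ) (H M : Matrix (Fin n) (Fin n) ℝ)
    (ε : ℝ) (hε : 0 < ε)
    (lam : Fin n → ℝ) (hlam : Antitone lam)
    (v : Fin n → EuclideanSpace ℝ (Fin n)) (hv : Orthonormal ℝ v)
    (hveig : ∀ i, H.mulVec (v i) = lam i • (v i))
    (lamt : Fin n → ℝ) (hlamt : Antitone lamt)
    (vt : Fin n → EuclideanSpace ℝ (Fin n)) (hvt : Orthonormal ℝ vt)
    (hvteig : ∀ i, (H + ε • M).mulVec (vt i) = lamt i • (vt i))
    (k : Fin n) (hk0 : 0 < (k : ℕ)) (hkn : (k : ℕ) + 1 < n)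
    (hgap : 0 < min (lam ⟨(k : ℕ) - 1, by omega⟩ - lam k)
                    (lam k - lam ⟨(k : ℕ) + 1, hkn⟩)) :
    Real.sqrt (1 - ⟪v k, vt k⟫ ^ 2) ≤
      2 * ε * ‖LinearMap.toContinuousLinearMap (Matrix.toEuclideanLin M)‖ /
        min (lam ⟨(k : ℕ) - 1, by omega⟩ - lam k)
            (lam k - lam ⟨(k : ℕ) + 1, hkn⟩) := by
  obtain ⟨b, rfl⟩ := hv.exists_orthonormalBasis_coe_eq (by simp)
  obtain ⟨c, rfl⟩ := hvt.exists_orthonormalBasis_coe_eq (by simp)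
  set A := LinearMap.toContinuousLinearMap (Matrix.toEuclideanLin H)
  set N := ‖LinearMap.toContinuousLinearMap (Matrix.toEuclideanLin M)‖
  set P := ε • LinearMap.toContinuousLinearMap (Matrix.toEuclideanLin M)
  have hA (i : Fin n) : A (b i) = lam i • b i :=
    Matrix.toEuclideanLin_apply_eq_smul_of_mulVec_eq (hveig i)
  have hAP (i : Fin n) : (A + P) (c i) = lamt i • c i := by
    simpa [A, P] using Matrix.toEuclideanLin_apply_eq_smul_of_mulVec_eq (hvteig i)
  have hP : ‖P‖ = ε * N := by rw [norm_smul, Real.norm_of_nonneg hε.le]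
  have hweyl : |lamt k - lam k| ≤ ε * N := by
    simpa [hP] using b.abs_eigenvalue_sub_le_norm_sub c hA hAP hlam hlamt k
  have hsep (i : Fin n) (hi : i ≠ k) :
      min (lam ⟨(k : ℕ) - 1, by omega⟩ - lam k) (lam k - lam ⟨(k : ℕ) + 1, hkn⟩) - ε * N ≤
        |lamt k - lam i| := by
    have := abs_sub_le (lam k) (lamt k) (lam i)
    rw [abs_sub_comm (lam k) (lamt k)] at this
    linarith [hlam.min_sub_le_abs_sub hkn hi]
  rw [mul_assoc]
  refine sqrt_le_two_mul_div_of_gap hgap (by positivity) (sub_le_self _ (sq_nonneg _))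
    fun hle => ?_
  calc _ ≤ ‖P (c k)‖ ^ 2 := by
        simpa [c.norm_eq_one] using b.sq_mul_sub_inner_sq_le hA (hAP k) (sub_nonneg.mpr hle) hsep
    _ ≤ (ε * N) ^ 2 := by
        gcongr
        simpa [c.norm_eq_one, hP] using P.le_opNorm (c k)
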